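/- Assume (G), and for each ψ ∈ C([-h,0],ℝ₊) let y(·,ψ) : [0,h] → B̄_b(x₂) denote the unique solution of y'(s) = −g(y(s), ψ(−s)), y(0) = x₂, and let τ(ψ) ∈ (0,h) be the unique time with y(τ(ψ),ψ) = x₁. Then the map τ : C([-h,0],ℝ₊) → [0,h], ψ ↦ τ(ψ), is locally Lipschitz with respect to the sup-norm; in particular |τ(ψ) − τ(ψ̄)| ≤ (1/ε)‖Y(ψ) − Y(ψ̄)‖ where Y(ψ) := y(·,ψ). -/

import Mathlib

noncomputable section

/-- The point -s ∈ [-h, 0] for s ∈ [0, h]. -/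
def negPt (h s : ℝ) (hs : s ∈ Set.Icc (0:ℝ) h) : Set.Icc (-h) (0:ℝ) :=
  ⟨-s, Set.mem_Icc.mpr ⟨by have := (Set.mem_Icc.mp hs).2; linarith,
    by have := (Set.mem_Icc.mp hs).1; linarith⟩⟩

/-- y is a solution on [0,h] of y'(s) = -g(y(s), ψ(-s)), y(0) = x₂, with values in
B̄_b(x₂) = [x₂-b, x₂+b]. -/
def IsSolY (x₂ b h : ℝ) (g : ℝ → ℝ → ℝ) (ψ : C(Set.Icc (-h) (0:ℝ), ℝ))
    (y : ℝ → ℝ) : Prop :=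
  y 0 = x₂ ∧ ∀ s : ℝ, ∀ hs : s ∈ Set.Icc (0:ℝ) h,
    y s ∈ Set.Icc (x₂ - b) (x₂ + b) ∧
    HasDerivWithinAt y (-(g (y s) (ψ (negPt h s hs)))) (Set.Icc (0:ℝ) h) s

/-- A solution decreases at rate at least ε. -/
lemma sol_decrease (x₂ b h ε K : ℝ) (g : ℝ → ℝ → ℝ)
    (hG3 : ∀ y ∈ Set.Icc (x₂ - b) (x₂ + b), ∀ z : ℝ, 0 ≤ z → ε ≤ g y z ∧ g y z ≤ K)
    (ψ : C(Set.Icc (-h) (0:ℝ), ℝ)) (hψ : ∀ θ, 0 ≤ ψ θ) (y : ℝ → ℝ)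
    (hy : IsSolY x₂ b h g ψ y) :
    ∀ s ∈ Set.Icc (0:ℝ) h, ∀ t ∈ Set.Icc (0:ℝ) h, s ≤ t → ε * (t - s) ≤ y s - y t := by
  have hcont : ContinuousOn y (Set.Icc 0 h) := fun u hu => ((hy.2 u hu).2).continuousWithinAt
  have hmono : MonotoneOn (fun u => -(y u) - ε * u) (Set.Icc 0 h) := by
    apply monotoneOn_of_deriv_nonneg (convex_Icc 0 h)
    · exact (hcont.neg).sub (continuousOn_const.mul continuousOn_id)
    · intro u hu
      rw [interior_Icc] at hu
      have hu' : u ∈ Set.Icc 0 h := Set.mem_Icc.mpr ⟨hu.1.le, hu.2.le⟩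
      have hyd := ((hy.2 u hu').2).hasDerivAt (Icc_mem_nhds hu.1 hu.2)
      have hmul : HasDerivAt (fun v : ℝ => ε * v) ε u := by
        simpa using (hasDerivAt_id u).const_mul ε
      exact ((hyd.neg).sub hmul).differentiableAt.differentiableWithinAt
    · intro u hu
      rw [interior_Icc] at hu
      have hu' : u ∈ Set.Icc 0 h := Set.mem_Icc.mpr ⟨hu.1.le, hu.2.le⟩
      have hyd := ((hy.2 u hu').2).hasDerivAt (Icc_mem_nhds hu.1 hu.2)
      have hmul : HasDerivAt (fun v : ℝ => ε * v) ε u := by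
        simpa using (hasDerivAt_id u).const_mul ε
      have hfd : HasDerivAt (fun u => -(y u) - ε * u)
          (g (y u) (ψ (negPt h u hu')) - ε) u := by
        have := (hyd.neg).sub hmul
        simp only [neg_neg] at this
        exact this
      rw [hfd.deriv]
      have hg := hG3 (y u) (hy.2 u hu').1 (ψ (negPt h u hu')) (hψ _)
      linarith [hg.1]
  intro s hs t ht hst
  have := hmono hs ht hst
  simp only at this
  nlinarith

/-- The quantitative estimate. -/
lemma tau_est (x₁ x₂ b h ε K : ℝ) (hε : 0 < ε) (g : ℝ → ℝ → ℝ)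
    (hG3 : ∀ y ∈ Set.Icc (x₂ - b) (x₂ + b), ∀ z : ℝ, 0 ≤ z → ε ≤ g y z ∧ g y z ≤ K)
    (ψ ψbar : C(Set.Icc (-h) (0:ℝ), ℝ)) (hψ : ∀ θ, 0 ≤ ψ θ) (hψbar : ∀ θ, 0 ≤ ψbar θ)
    (y ybar : ℝ → ℝ) (hy : IsSolY x₂ b h g ψ y) (hybar : IsSolY x₂ b h g ψbar ybar)
    (τ τbar : ℝ) (hτ : τ ∈ Set.Icc (0:ℝ) h) (hτbar : τbar ∈ Set.Icc (0:ℝ) h)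
    (hyτ : y τ = x₁) (hybarτ : ybar τbar = x₁)
    (C : ℝ) (hC : ∀ s ∈ Set.Icc (0:ℝ) h, |y s - ybar s| ≤ C) :
    |τ - τbar| ≤ (1 / ε) * C := by
  have key : ∀ (ψ ψbar : C(Set.Icc (-h) (0:ℝ), ℝ)), (∀ θ, 0 ≤ ψ θ) → (∀ θ, 0 ≤ ψbar θ) →
      ∀ (y ybar : ℝ → ℝ), IsSolY x₂ b h g ψ y → IsSolY x₂ b h g ψbar ybar →
      ∀ (τ τbar : ℝ), τ ∈ Set.Icc (0:ℝ) h → τbar ∈ Set.Icc (0:ℝ) h →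
      y τ = x₁ → ybar τbar = x₁ → τ ≤ τbar →
      (∀ s ∈ Set.Icc (0:ℝ) h, |y s - ybar s| ≤ C) → τbar - τ ≤ (1 / ε) * C := by
    intro ψ ψbar hψ hψbar y ybar hy hybar τ τbar hτ hτbar hyτ hybarτ hle hC
    have hd := sol_decrease x₂ b h ε K g hG3 ψ hψ y hy τ hτ τbar hτbar hle
    have h1 := hC τbar hτbar
    have h2 := (abs_le.mp h1).1
    have h3 : ε * (τbar - τ) ≤ C := by
      rw [hyτ, ← hybarτ] at hd
      linarith
    have h4 : τbar - τ ≤ C / ε := (le_div_iff₀ hε).mpr (by nlinarith)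
    calc τbar - τ ≤ C / ε := h4
      _ = (1 / ε) * C := by ring
  rcases le_total τ τbar with hle | hle
  · rw [abs_sub_comm, abs_of_nonneg (by linarith)]
    exact key ψ ψbar hψ hψbar y ybar hy hybar τ τbar hτ hτbar hyτ hybarτ hle hC
  · rw [abs_of_nonneg (by linarith)]
    exact key ψbar ψ hψbar hψ ybar y hybar hy τbar τ hτbar hτ hybarτ hyτ hle
      (fun s hs => by rw [abs_sub_comm]; exact hC s hs)

lemma gronwallBound_scale (M e x h : ℝ) (hM : 0 ≤ M) (he : 0 ≤ e) (hx : 0 ≤ x) (hxh : x ≤ h) :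
    gronwallBound 0 M e x ≤ e * gronwallBound 0 M 1 h := by
  rcases eq_or_lt_of_le hM with hM0 | hMpos
  · rw [← hM0]
    simp [gronwallBound]
    nlinarith
  · rw [gronwallBound_of_K_ne_0 (ne_of_gt hMpos), gronwallBound_of_K_ne_0 (ne_of_gt hMpos)]
    simp only [zero_mul, zero_add]
    have h1 : Real.exp (M * x) ≤ Real.exp (M * h) := Real.exp_le_exp.mpr (by nlinarith)
    have h2 : e / M * (Real.exp (M * x) - 1) ≤ e / M * (Real.exp (M * h) - 1) :=
      mul_le_mul_of_nonneg_left (by linarith) (div_nonneg he hMpos.le)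
    calc e / M * (Real.exp (M * x) - 1) ≤ e / M * (Real.exp (M * h) - 1) := h2
      _ = e * (1 / M * (Real.exp (M * h) - 1)) := by ring

lemma gronwallBound_one_nonneg (M h : ℝ) (hM : 0 ≤ M) (hh : 0 ≤ h) :
    0 ≤ gronwallBound 0 M 1 h := by
  rcases eq_or_lt_of_le hM with hM0 | hMpos
  · rw [← hM0]; simp [gronwallBound]; linarith
  · rw [gronwallBound_of_K_ne_0 (ne_of_gt hMpos)]
    have h2 : (1:ℝ) ≤ Real.exp (M * h) := by
      rw [← Real.exp_zero]; exact Real.exp_le_exp.mpr (by positivity)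
    have : (0:ℝ) ≤ 1 / M * (Real.exp (M * h) - 1) :=
      mul_nonneg (by positivity) (by linarith)
    linarith

/-- Lemma 4.4. Under condition (G), the map ψ ↦ τ(ψ) is locally
Lipschitz w.r.t. the sup-norm; in particular |τ(ψ) - τ(ψ̄)| ≤ (1/ε) ‖Y(ψ) - Y(ψ̄)‖. -/
theorem statement19 (x₁ x₂ b K ε : ℝ) (hx : x₁ < x₂) (hb : 0 < b)
    (hε : 0 < ε) (hεK : ε < K) (hgap : x₂ - x₁ < b / K * ε)
    (g Dg : ℝ → ℝ → ℝ)
    (hG1 : ∀ z : ℝ, 0 ≤ z → ∃ δ : ℝ, 0 < δ ∧ ∃ L : ℝ,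
      ∀ y ∈ Set.Icc (x₂ - b) (x₂ + b), ∀ z₁ z₂ : ℝ, 0 ≤ z₁ → 0 ≤ z₂ →
        |z₁ - z| ≤ δ → |z₂ - z| ≤ δ → |g y z₁ - g y z₂| ≤ L * |z₁ - z₂|)
    (hG2d : ∀ z : ℝ, 0 ≤ z → ∀ y ∈ Set.Icc (x₂ - b) (x₂ + b),
      HasDerivWithinAt (fun y' => g y' z) (Dg y z) (Set.Icc (x₂ - b) (x₂ + b)) y)
    (hG2lip : ∃ LD : ℝ, ∀ y ∈ Set.Icc (x₂ - b) (x₂ + b), ∀ y' ∈ Set.Icc (x₂ - b) (x₂ + b),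
      ∀ z z' : ℝ, 0 ≤ z → 0 ≤ z' → |Dg y z - Dg y' z'| ≤ LD * (|y - y'| + |z - z'|))
    (hG2bd : ∃ M : ℝ, M < K / b ∧
      ∀ y ∈ Set.Icc (x₂ - b) (x₂ + b), ∀ z : ℝ, 0 ≤ z → |Dg y z| ≤ M)
    (hG3 : ∀ y ∈ Set.Icc (x₂ - b) (x₂ + b), ∀ z : ℝ, 0 ≤ z → ε ≤ g y z ∧ g y z ≤ K) :
    -- τ is locally Lipschitz w.r.t. the sup-norm
    (∀ ψ₀ : C(Set.Icc (-(b / K)) (0:ℝ), ℝ), (∀ θ, 0 ≤ ψ₀ θ) →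
      ∃ δ : ℝ, 0 < δ ∧ ∃ L : ℝ, 0 ≤ L ∧
        ∀ ψ ψbar : C(Set.Icc (-(b / K)) (0:ℝ), ℝ),
          (∀ θ, 0 ≤ ψ θ) → (∀ θ, 0 ≤ ψbar θ) →
          ‖ψ - ψ₀‖ ≤ δ → ‖ψbar - ψ₀‖ ≤ δ →
          ∀ y ybar : ℝ → ℝ, IsSolY x₂ b (b / K) g ψ y → IsSolY x₂ b (b / K) g ψbar ybar →
          ∀ τ τbar : ℝ, τ ∈ Set.Icc (0:ℝ) (b / K) → τbar ∈ Set.Icc (0:ℝ) (b / K) →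
            y τ = x₁ → ybar τbar = x₁ → |τ - τbar| ≤ L * ‖ψ - ψbar‖) ∧
    -- the quantitative estimate |τ(ψ) - τ(ψ̄)| ≤ (1/ε) ‖Y(ψ) - Y(ψ̄)‖
    (∀ ψ ψbar : C(Set.Icc (-(b / K)) (0:ℝ), ℝ),
      (∀ θ, 0 ≤ ψ θ) → (∀ θ, 0 ≤ ψbar θ) →
      ∀ y ybar : ℝ → ℝ, IsSolY x₂ b (b / K) g ψ y → IsSolY x₂ b (b / K) g ψbar ybar →
      ∀ τ τbar : ℝ, τ ∈ Set.Icc (0:ℝ) (b / K) → τbar ∈ Set.Icc (0:ℝ) (b / K) →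
        y τ = x₁ → ybar τbar = x₁ →
        ∀ C : ℝ, (∀ s ∈ Set.Icc (0:ℝ) (b / K), |y s - ybar s| ≤ C) →
          |τ - τbar| ≤ (1 / ε) * C) := by
  have hK : 0 < K := hε.trans hεK
  have hh : 0 < b / K := div_pos hb hK
  have hle0 : -(b / K) ≤ (0:ℝ) := by linarith
  obtain ⟨M, hMK, hMbd⟩ := hG2bd
  have hx₂mem : x₂ ∈ Set.Icc (x₂ - b) (x₂ + b) := ⟨by linarith, by linarith⟩
  have hM0 : 0 ≤ M := le_trans (abs_nonneg _) (hMbd x₂ hx₂mem 0 le_rfl)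
  -- Lipschitz in the first variable, with constant M
  have glip : ∀ z : ℝ, 0 ≤ z → ∀ u ∈ Set.Icc (x₂ - b) (x₂ + b),
      ∀ v ∈ Set.Icc (x₂ - b) (x₂ + b), |g u z - g v z| ≤ M * |u - v| := by
    intro z hz u hu v hv
    have := Convex.norm_image_sub_le_of_norm_hasDerivWithin_le
      (f := fun y' => g y' z) (f' := fun y' => Dg y' z)
      (fun w hw => hG2d z hz w hw)
      (fun w hw => by rw [Real.norm_eq_abs]; exact hMbd w hw z hz)
      (convex_Icc _ _) hv hu
    simpa [Real.norm_eq_abs] using this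
  constructor
  · -- locally Lipschitz
    intro ψ₀ hψ₀0
    choose! δf hδf Lf hLf using hG1
    set R : ℝ := ‖ψ₀‖ with hRdef
    have hR : 0 ≤ R := norm_nonneg _
    obtain ⟨t, htK, hcover⟩ := isCompact_Icc.elim_nhds_subcover
      (fun z => Metric.ball z (δf z / 2))
      (fun z hz => Metric.ball_mem_nhds z (by have := hδf z hz.1; linarith))
      (s := Set.Icc (0:ℝ) R)
    have ht : t.Nonempty := by
      have h0 : (0:ℝ) ∈ Set.Icc (0:ℝ) R := ⟨le_rfl, hR⟩
      obtain ⟨z, hz, -⟩ := Set.mem_iUnion₂.mp (hcover h0)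
      exact ⟨z, hz⟩
    set δ : ℝ := t.inf' ht (fun z => δf z / 2) with hδdef
    set L : ℝ := max (t.sup' ht Lf) 0 with hLdef
    have hδpos : 0 < δ := by
      rw [hδdef, Finset.lt_inf'_iff]
      intro z hz
      have := hδf z (htK z hz).1
      linarith
    have hL0 : 0 ≤ L := le_max_right _ _
    have keyL : ∀ u ∈ Set.Icc (x₂ - b) (x₂ + b), ∀ z₀ ∈ Set.Icc (0:ℝ) R,
        ∀ z₁ z₂ : ℝ, 0 ≤ z₁ → 0 ≤ z₂ → |z₁ - z₀| ≤ δ → |z₂ - z₀| ≤ δ →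
        |g u z₁ - g u z₂| ≤ L * |z₁ - z₂| := by
      intro u hu z₀ hz₀ z₁ z₂ hz₁ hz₂ hd₁ hd₂
      obtain ⟨z, hzt, hzball⟩ := Set.mem_iUnion₂.mp (hcover hz₀)
      have hz0 : 0 ≤ z := (htK z hzt).1
      have hdz : δ ≤ δf z / 2 := Finset.inf'_le _ hzt
      have hball : |z₀ - z| < δf z / 2 := by
        have := Metric.mem_ball.mp hzball
        rwa [Real.dist_eq] at this
      have habs : ∀ w : ℝ, |w - z₀| ≤ δ → |w - z| ≤ δf z := by
        intro w hw
        calc |w - z| ≤ |w - z₀| + |z₀ - z| := abs_sub_le w z₀ z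
          _ ≤ δf z := by linarith
      have := hLf z hz0 u hu z₁ z₂ hz₁ hz₂ (habs z₁ hd₁) (habs z₂ hd₂)
      refine this.trans (mul_le_mul_of_nonneg_right ?_ (abs_nonneg _))
      exact le_trans (Finset.le_sup' Lf hzt) (le_max_left _ _)
    set Cb : ℝ := gronwallBound 0 M 1 (b / K) with hCbdef
    have hCb : 0 ≤ Cb := gronwallBound_one_nonneg M (b / K) hM0 hh.le
    refine ⟨δ, hδpos, (1 / ε) * L * Cb, ?_, ?_⟩
    · exact mul_nonneg (mul_nonneg (by positivity) hL0) hCb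
    intro ψ ψbar hψ0 hψbar0 hψδ hψbarδ y ybar hy hybar τ τbar hτ hτbar hyτ hybarτ
    -- Grönwall estimate on |y - ybar|
    set F : ℝ → ℝ := fun x =>
      -(g (y x) (ψ (Set.projIcc (-(b / K)) 0 hle0 (-x)))) +
        g (ybar x) (ψbar (Set.projIcc (-(b / K)) 0 hle0 (-x))) with hFdef
    have hcontsub : ContinuousOn (fun s => y s - ybar s) (Set.Icc (0:ℝ) (b / K)) :=
      fun u hu => ((hy.2 u hu).2.continuousWithinAt).sub ((hybar.2 u hu).2.continuousWithinAt)
    have hproj : ∀ (x : ℝ) (hx' : x ∈ Set.Icc (0:ℝ) (b / K)),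
        Set.projIcc (-(b / K)) 0 hle0 (-x) = negPt (b / K) x hx' := by
      intro x hx'
      have hmem : -x ∈ Set.Icc (-(b / K)) (0:ℝ) :=
        ⟨by have := hx'.2; linarith, by have := hx'.1; linarith⟩
      exact Set.projIcc_of_mem hle0 hmem
    have hder : ∀ x ∈ Set.Ico (0:ℝ) (b / K),
        HasDerivWithinAt (fun s => y s - ybar s) (F x) (Set.Ici x) x := by
      intro x hx
      have hx' : x ∈ Set.Icc (0:ℝ) (b / K) := Set.Ico_subset_Icc_self hx
      have h1 := (hy.2 x hx').2
      have h2 := (hybar.2 x hx').2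
      have h3 := (h1.sub h2).mono_of_mem_nhdsWithin (Icc_mem_nhdsGE_of_mem hx)
      refine h3.congr_deriv ?_
      rw [hFdef]
      simp only [hproj x hx']
      ring
    have ha : ‖y 0 - ybar 0‖ ≤ 0 := by
      rw [hy.1, hybar.1, sub_self, norm_zero]
    have hbound : ∀ x ∈ Set.Ico (0:ℝ) (b / K),
        ‖F x‖ ≤ M * ‖y x - ybar x‖ + L * ‖ψ - ψbar‖ := by
      intro x hx
      have hx' : x ∈ Set.Icc (0:ℝ) (b / K) := Set.Ico_subset_Icc_self hx
      set θ := negPt (b / K) x hx' with hθdef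
      set z₁ := ψ θ
      set z₂ := ψbar θ
      set z₀ := ψ₀ θ
      have hz₀mem : z₀ ∈ Set.Icc (0:ℝ) R := by
        refine ⟨hψ₀0 θ, ?_⟩
        exact le_trans (le_abs_self _)
          (by rw [← Real.norm_eq_abs]; exact ContinuousMap.norm_coe_le_norm ψ₀ θ)
      have hz₁δ : |z₁ - z₀| ≤ δ := by
        have h := ContinuousMap.norm_coe_le_norm (ψ - ψ₀) θ
        rw [ContinuousMap.sub_apply, Real.norm_eq_abs] at h
        exact h.trans hψδ
      have hz₂δ : |z₂ - z₀| ≤ δ := by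
        have h := ContinuousMap.norm_coe_le_norm (ψbar - ψ₀) θ
        rw [ContinuousMap.sub_apply, Real.norm_eq_abs] at h
        exact h.trans hψbarδ
      have hz₁₂ : |z₂ - z₁| ≤ ‖ψ - ψbar‖ := by
        have h := ContinuousMap.norm_coe_le_norm (ψbar - ψ) θ
        rw [ContinuousMap.sub_apply, Real.norm_eq_abs] at h
        rw [← norm_sub_rev]
        exact h
      have hymem := (hy.2 x hx').1
      have hybarmem := (hybar.2 x hx').1
      have h₁ : |g (ybar x) z₁ - g (y x) z₁| ≤ M * |ybar x - y x| :=
        glip z₁ (hψ0 θ) (ybar x) hybarmem (y x) hymem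
      have h₂ : |g (ybar x) z₂ - g (ybar x) z₁| ≤ L * |z₂ - z₁| :=
        keyL (ybar x) hybarmem z₀ hz₀mem z₂ z₁ (hψbar0 θ) (hψ0 θ) hz₂δ hz₁δ
      have hFval : F x = g (ybar x) z₂ - g (y x) z₁ := by
        rw [hFdef]
        simp only [hproj x hx']
        ring
      rw [hFval, Real.norm_eq_abs, Real.norm_eq_abs]
      have htri : |g (ybar x) z₂ - g (y x) z₁| ≤
          |g (ybar x) z₂ - g (ybar x) z₁| + |g (ybar x) z₁ - g (y x) z₁| :=
        abs_sub_le _ _ _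
      have h₂' : L * |z₂ - z₁| ≤ L * ‖ψ - ψbar‖ := mul_le_mul_of_nonneg_left hz₁₂ hL0
      have habs : |ybar x - y x| = |y x - ybar x| := abs_sub_comm _ _
      rw [habs] at h₁
      linarith
    have hgron := norm_le_gronwallBound_of_norm_deriv_right_le
      hcontsub hder ha hbound
    have hsup : ∀ s ∈ Set.Icc (0:ℝ) (b / K),
        |y s - ybar s| ≤ L * ‖ψ - ψbar‖ * Cb := by
      intro s hs
      have h1 := hgron s hs
      rw [Real.norm_eq_abs] at h1
      refine h1.trans ?_
      rw [sub_zero]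
      exact gronwallBound_scale M (L * ‖ψ - ψbar‖) s (b / K) hM0
        (mul_nonneg hL0 (norm_nonneg _)) hs.1 hs.2
    have := tau_est x₁ x₂ b (b / K) ε K hε g hG3 ψ ψbar hψ0 hψbar0 y ybar hy hybar
      τ τbar hτ hτbar hyτ hybarτ (L * ‖ψ - ψbar‖ * Cb) hsup
    calc |τ - τbar| ≤ (1 / ε) * (L * ‖ψ - ψbar‖ * Cb) := this
      _ = (1 / ε) * L * Cb * ‖ψ - ψbar‖ := by ring
  · intro ψ ψbar hψ hψbar y ybar hy hybar τ τbar hτ hτbar h1 h2 C hC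
    exact tau_est x₁ x₂ b (b / K) ε K hε g hG3 ψ ψbar hψ hψbar y ybar hy hybar
      τ τbar hτ hτbar h1 h2 C hC
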